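/- arXiv:2205.11322 — 2 statements merged into one kernel-verified Lean document; each statement's English description precedes it below -/
import Mathlib

section
/- For the symmetrically normalized adjacency matrix with self-loops, S = D̃^{-1/2} Ã D̃^{-1/2}, the eigenvalue -1 is not attained; i.e., every eigenvalue lies in (-1, 1]. -/
/-- For `S = D̃^{-1/2} Ã D̃^{-1/2}` with `Ã = A + I`, the eigenvalue `-1` is
never attained: every eigenvalue lies in `(-1, 1]`. -/
theorem stmt_11 {n : ℕ} (A : Matrix (Fin n) (Fin n) ℝ)
    (hsym : A.IsSymm) (hnn : ∀ i j, 0 ≤ A i j)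
    (Atil : Matrix (Fin n) (Fin n) ℝ) (hAtil : Atil = A + 1)
    (d : Fin n → ℝ) (hd : ∀ i, d i = ∑ j, Atil i j)
    (S : Matrix (Fin n) (Fin n) ℝ)
    (hS : ∀ i j, S i j = Atil i j / (Real.sqrt (d i) * Real.sqrt (d j)))
    (μ : ℝ) (v : Fin n → ℝ) (hv : v ≠ 0) (heig : S.mulVec v = μ • v) :
    -1 < μ ∧ μ ≤ 1 := by
  have hNnn : ∀ i j, 0 ≤ Atil i j := by
    intro i j
    by_cases h : i = j
    · subst h
      simp only [hAtil, Matrix.add_apply, Matrix.one_apply_eq]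
      linarith [hnn i i]
    · simpa [hAtil, Matrix.add_apply, Matrix.one_apply, h] using hnn i j
  have hNdiag : ∀ i, (1:ℝ) ≤ Atil i i := by
    intro i
    simp only [hAtil, Matrix.add_apply, Matrix.one_apply_eq]
    linarith [hnn i i]
  have hNsymm : ∀ i j, Atil i j = Atil j i := by
    intro i j
    have hsa := hsym.apply i j
    by_cases h : i = j
    · subst h; rfl
    · simp [hAtil, Matrix.add_apply, Matrix.one_apply, h, Ne.symm h, hsa]
  have hdpos : ∀ i, 0 < d i := by
    intro i
    rw [hd]
    have h1 : Atil i i ≤ ∑ j, Atil i j :=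
      Finset.single_le_sum (fun j _ => hNnn i j) (Finset.mem_univ i)
    have := hNdiag i
    linarith
  set s : Fin n → ℝ := fun i => Real.sqrt (d i) with hsdef
  have hspos : ∀ i, 0 < s i := fun i => Real.sqrt_pos.mpr (hdpos i)
  have hsne : ∀ i, s i ≠ 0 := fun i => (hspos i).ne'
  have hssq : ∀ i, s i * s i = d i := fun i => Real.mul_self_sqrt (hdpos i).le
  set y : Fin n → ℝ := fun i => v i / s i with hydef
  have hvy : ∀ i, v i = y i * s i := by
    intro i
    show v i = v i / s i * s i
    rw [div_mul_cancel₀ _ (hsne i)]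
  have heig' : ∀ i, ∑ j, S i j * v j = μ * v i := by
    intro i
    have := congrFun heig i
    simpa [Matrix.mulVec, dotProduct] using this
  have hrow : ∀ i, ∑ j, Atil i j * y j = s i * (μ * v i) := by
    intro i
    rw [← heig' i, Finset.mul_sum]
    apply Finset.sum_congr rfl
    intro j _
    rw [hS]
    show Atil i j * (v j / s j) = s i * (Atil i j / (s i * s j) * v j)
    rw [div_mul_eq_mul_div, mul_div_assoc]
    rw [show s i * (Atil i j * (v j / (s i * s j))) =
        Atil i j * (v j * (s i / (s i * s j))) by ring]
    rw [div_mul_cancel_left₀ (hsne i), ← div_eq_mul_inv]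
  -- quadratic form value
  have hT : ∑ i, ∑ j, Atil i j * (y i * y j) = μ * ∑ i, v i ^ 2 := by
    rw [Finset.mul_sum]
    apply Finset.sum_congr rfl
    intro i _
    have h1 : ∑ j, Atil i j * (y i * y j) = y i * ∑ j, Atil i j * y j := by
      rw [Finset.mul_sum]; apply Finset.sum_congr rfl; intro j _; ring
    rw [h1, hrow i, hvy i]
    ring
  have hdeg : ∀ i, ∑ j, Atil i j = d i := fun i => (hd i).symm
  have hA1 : ∑ i, ∑ j, Atil i j * y i ^ 2 = ∑ i, v i ^ 2 := by
    apply Finset.sum_congr rfl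
    intro i _
    rw [← Finset.sum_mul, hdeg i, ← hssq i, hvy i]
    ring
  have hA2 : ∑ i, ∑ j, Atil i j * y j ^ 2 = ∑ i, v i ^ 2 := by
    rw [Finset.sum_comm, ← hA1]
    apply Finset.sum_congr rfl; intro i _
    apply Finset.sum_congr rfl; intro j _
    rw [hNsymm i j]
  have hvsq : 0 < ∑ i, v i ^ 2 := by
    obtain ⟨i, hi⟩ : ∃ i, v i ≠ 0 := by
      by_contra h
      push_neg at h
      exact hv (funext h)
    apply Finset.sum_pos' (fun j _ => sq_nonneg _)
    exact ⟨i, Finset.mem_univ i, by positivity⟩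
  have hysq : 0 < ∑ i, y i ^ 2 := by
    obtain ⟨i, hi⟩ : ∃ i, v i ≠ 0 := by
      by_contra h
      push_neg at h
      exact hv (funext h)
    have hyi : y i ≠ 0 := by
      show v i / s i ≠ 0
      exact div_ne_zero hi (hsne i)
    apply Finset.sum_pos' (fun j _ => sq_nonneg _)
    exact ⟨i, Finset.mem_univ i, by positivity⟩
  -- upper bound via minus form
  have hMexp : ∑ i, ∑ j, Atil i j * (y i - y j) ^ 2
      = (2 - 2 * μ) * ∑ i, v i ^ 2 := by
    have e1 : ∑ i, ∑ j, Atil i j * (y i - y j) ^ 2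
        = (∑ i, ∑ j, Atil i j * y i ^ 2)
          - 2 * (∑ i, ∑ j, Atil i j * (y i * y j))
          + ∑ i, ∑ j, Atil i j * y j ^ 2 := by
      simp_rw [Finset.mul_sum, ← Finset.sum_sub_distrib, ← Finset.sum_add_distrib]
      apply Finset.sum_congr rfl; intro i _
      apply Finset.sum_congr rfl; intro j _
      ring
    rw [e1, hA1, hA2, hT]
    ring
  have hMnn : 0 ≤ ∑ i, ∑ j, Atil i j * (y i - y j) ^ 2 := by
    apply Finset.sum_nonneg; intro i _
    apply Finset.sum_nonneg; intro j _
    exact mul_nonneg (hNnn i j) (sq_nonneg _)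
  have hmu1 : μ ≤ 1 := by
    nlinarith [hMexp, hMnn, hvsq]
  -- lower bound via plus form
  have hPexp : ∑ i, ∑ j, Atil i j * (y i + y j) ^ 2
      = (2 + 2 * μ) * ∑ i, v i ^ 2 := by
    have e1 : ∑ i, ∑ j, Atil i j * (y i + y j) ^ 2
        = (∑ i, ∑ j, Atil i j * y i ^ 2)
          + 2 * (∑ i, ∑ j, Atil i j * (y i * y j))
          + ∑ i, ∑ j, Atil i j * y j ^ 2 := by
      simp_rw [Finset.mul_sum, ← Finset.sum_add_distrib]
      apply Finset.sum_congr rfl; intro i _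
      apply Finset.sum_congr rfl; intro j _
      ring
    rw [e1, hA1, hA2, hT]
    ring
  have hPlow : 4 * ∑ i, y i ^ 2 ≤ ∑ i, ∑ j, Atil i j * (y i + y j) ^ 2 := by
    rw [Finset.mul_sum]
    apply Finset.sum_le_sum
    intro i _
    have h1 : Atil i i * (y i + y i) ^ 2 ≤ ∑ j, Atil i j * (y i + y j) ^ 2 :=
      Finset.single_le_sum (f := fun j => Atil i j * (y i + y j) ^ 2)
        (fun j _ => mul_nonneg (hNnn i j) (sq_nonneg _)) (Finset.mem_univ i)
    have h2 : 4 * y i ^ 2 ≤ Atil i i * (y i + y i) ^ 2 := by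
      nlinarith [hNdiag i, sq_nonneg (y i)]
    linarith
  have hmu2 : -1 < μ := by
    nlinarith [hPexp, hPlow, hysq, hvsq]
  exact ⟨hmu2, hmu1⟩
end

section
/- If after edge deletion the graph decomposes into connected components each of which contains nodes of only one class, then in the limit of infinitely many graph convolutions with S (eigenvalue-1 projection), the propagated features of nodes are constant multiples of D̃^{1/2} within each component; consequently a linear classifier can separate the classes provided the per-component mean features are linearly separable. -/
/-!
Write `d` for the row sums of `Ã`, `S = D^{-1/2} Ã D^{-1/2}` and `y = D^{-1/2} x`. Then
`∑ᵢⱼ Ãᵢⱼ (yᵢ - ε yⱼ)² = 2 (‖x‖² - ε ⟨x, S x⟩)` for `ε = ±1`. With `ε = 1` this bounds the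
spectrum of the symmetric matrix `S` by `1`; with `ε = -1`, the self-loops `Ãᵢᵢ = 1` keep it
strictly above `-1`. By the spectral theorem `S^K` then converges, and the limit `Y` of `S^K X`
satisfies `S Y = Y`. For a fixed column of `Y` the `ε = 1` sum vanishes, so `D^{-1/2} Y` is
constant along edges, hence on connected components.
-/

open Filter Topology Matrix

theorem tendsto_pow_atTop_of_mem_Ioc {μ : ℝ} (hμ : μ ∈ Set.Ioc (-1) 1) :
    Tendsto (fun K : ℕ => μ ^ K) atTop (𝓝 (if μ = 1 then 1 else 0)) := by
  split_ifs with h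
  · simp [h]
  · exact tendsto_pow_atTop_nhds_zero_of_abs_lt_one (abs_lt.2 ⟨hμ.1, hμ.2.lt_of_ne h⟩)

theorem Matrix.IsHermitian.exists_tendsto_pow {𝕜 ι : Type*} [RCLike 𝕜] [Fintype ι]
    [DecidableEq ι] {S : Matrix ι ι 𝕜} (hS : S.IsHermitian)
    (h : ∀ i, hS.eigenvalues i ∈ Set.Ioc (-1) 1) :
    ∃ P, Tendsto (fun K : ℕ => S ^ K) atTop (𝓝 P) := by
  set U : Matrix ι ι 𝕜 := (hS.eigenvectorUnitary : Matrix ι ι 𝕜)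
  set φ := Unitary.conjStarAlgAut 𝕜 _ hS.eigenvectorUnitary
  have hφ : Continuous φ := by
    rw [show ⇑φ = fun M => U * M * star U from funext (Unitary.conjStarAlgAut_apply _)]
    fun_prop
  have hpow : ∀ K : ℕ, S ^ K = φ (diagonal fun i => ((hS.eigenvalues i ^ K : ℝ) : 𝕜)) := by
    intro K
    conv_lhs => rw [hS.spectral_theorem]
    rw [← map_pow, diagonal_pow]
    simp [φ, Function.comp_def, Pi.pow_def]
  have hdiag : Tendsto (fun K : ℕ => diagonal fun i => ((hS.eigenvalues i ^ K : ℝ) : 𝕜)) atTop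
      (𝓝 (diagonal fun i => ((if hS.eigenvalues i = 1 then 1 else 0 : ℝ) : 𝕜))) :=
    ((by fun_prop : Continuous fun v : ι → 𝕜 => diagonal v).tendsto _).comp <|
      tendsto_pi_nhds.2 fun i =>
        (RCLike.continuous_ofReal.tendsto _).comp (tendsto_pow_atTop_of_mem_Ioc (h i))
  simp only [hpow]
  exact ⟨_, (hφ.tendsto _).comp hdiag⟩

theorem Matrix.IsHermitian.eigenvalues_mem_Ioc {ι : Type*} [Fintype ι] [DecidableEq ι]
    {S : Matrix ι ι ℝ} (hS : S.IsHermitian)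
    (h : ∀ x ≠ 0, -(x ⬝ᵥ x) < x ⬝ᵥ S *ᵥ x ∧ x ⬝ᵥ S *ᵥ x ≤ x ⬝ᵥ x) (i : ι) :
    hS.eigenvalues i ∈ Set.Ioc (-1) 1 := by
  set v : ι → ℝ := ⇑(hS.eigenvectorBasis i)
  have hv : v ≠ 0 := fun hv =>
    hS.eigenvectorBasis.orthonormal.ne_zero i (by ext j; exact congrFun hv j)
  have hvv : 0 < v ⬝ᵥ v :=
    lt_of_le_of_ne (Finset.sum_nonneg fun j _ => mul_self_nonneg (v j))
      (Ne.symm (dotProduct_self_eq_zero.not.2 hv))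
  have hRayleigh : v ⬝ᵥ S *ᵥ v = hS.eigenvalues i * (v ⬝ᵥ v) := by
    rw [hS.mulVec_eigenvectorBasis i, dotProduct_smul, smul_eq_mul]
  obtain ⟨hlo, hhi⟩ := h v hv
  rw [hRayleigh] at hlo hhi
  exact ⟨by nlinarith, by nlinarith⟩

theorem Matrix.mul_eq_of_tendsto_pow_mul {R ι κ : Type*} [Fintype ι] [DecidableEq ι] [Ring R]
    [TopologicalSpace R] [IsTopologicalRing R] [T2Space R] {S : Matrix ι ι R}
    {X Y : Matrix ι κ R} (h : Tendsto (fun K : ℕ => S ^ K * X) atTop (𝓝 Y)) :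
    S * Y = Y := by
  have hS : Tendsto (fun K : ℕ => S * (S ^ K * X)) atTop (𝓝 (S * Y)) :=
    ((continuous_const.matrix_mul continuous_id).tendsto Y).comp h
  refine tendsto_nhds_unique hS ?_
  simpa only [← Matrix.mul_assoc, ← pow_succ'] using (tendsto_add_atTop_iff_nat 1).2 h

section SymmNormalized

variable {ι : Type*} [Fintype ι] {A : Matrix ι ι ℝ}

noncomputable def symmNormalized (A : Matrix ι ι ℝ) : Matrix ι ι ℝ :=
  of fun i j => A i j / (√(∑ k, A i k) * √(∑ k, A j k))

theorem isHermitian_symmNormalized (hA : A.IsSymm) : (symmNormalized A).IsHermitian := by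
  ext i j
  simp [symmNormalized, hA.apply i j, mul_comm]

theorem sum_row_pos (hnonneg : ∀ i j, 0 ≤ A i j) (hdiag : ∀ i, 0 < A i i) (i : ι) :
    0 < ∑ k, A i k :=
  (hdiag i).trans_le (Finset.single_le_sum (fun k _ => hnonneg i k) (Finset.mem_univ i))

theorem sum_mul_sub_sq_symmNormalized (hA : A.IsSymm) (hdeg : ∀ i, 0 < ∑ k, A i k)
    (x : ι → ℝ) {ε : ℝ} (hε : ε ^ 2 = 1) :
    ∑ i, ∑ j, A i j * (x i / √(∑ k, A i k) - ε * (x j / √(∑ k, A j k))) ^ 2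
      = 2 * (x ⬝ᵥ x) - 2 * ε * (x ⬝ᵥ symmNormalized A *ᵥ x) := by
  set y : ι → ℝ := fun i => x i / √(∑ k, A i k)
  have hx : ∀ i, x i = √(∑ k, A i k) * y i := fun i =>
    (mul_div_cancel₀ _ (Real.sqrt_pos.2 (hdeg i)).ne').symm
  have hsq : x ⬝ᵥ x = ∑ i, ∑ j, A i j * y i ^ 2 := by
    refine Finset.sum_congr rfl fun i _ => ?_
    rw [← Finset.sum_mul, hx i]
    ring_nf
    rw [Real.sq_sqrt (hdeg i).le]
    ring
  have hsq' : x ⬝ᵥ x = ∑ i, ∑ j, A i j * y j ^ 2 := by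
    rw [Finset.sum_comm, hsq]
    simp only [hA.apply]
  have hform : x ⬝ᵥ symmNormalized A *ᵥ x = ∑ i, ∑ j, A i j * y i * y j := by
    simp only [dotProduct, mulVec, Finset.mul_sum]
    refine Finset.sum_congr rfl fun i _ => Finset.sum_congr rfl fun j _ => ?_
    simp only [symmNormalized, of_apply, y]
    field_simp
  calc ∑ i, ∑ j, A i j * (y i - ε * y j) ^ 2
      = ∑ i, ∑ j, A i j * y i ^ 2 + ε ^ 2 * ∑ i, ∑ j, A i j * y j ^ 2
          - 2 * ε * ∑ i, ∑ j, A i j * y i * y j := by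
        simp only [Finset.mul_sum, ← Finset.sum_add_distrib, ← Finset.sum_sub_distrib]
        refine Finset.sum_congr rfl fun i _ => Finset.sum_congr rfl fun j _ => ?_
        ring
    _ = 2 * (x ⬝ᵥ x) - 2 * ε * (x ⬝ᵥ symmNormalized A *ᵥ x) := by
        rw [← hsq, ← hsq', ← hform, hε]
        ring

theorem dotProduct_symmNormalized_mulVec_le (hA : A.IsSymm) (hnonneg : ∀ i j, 0 ≤ A i j)
    (hdeg : ∀ i, 0 < ∑ k, A i k) (x : ι → ℝ) :
    x ⬝ᵥ symmNormalized A *ᵥ x ≤ x ⬝ᵥ x := by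
  have h := sum_mul_sub_sq_symmNormalized hA hdeg x (one_pow 2)
  have : 0 ≤ ∑ i, ∑ j, A i j * (x i / √(∑ k, A i k) - 1 * (x j / √(∑ k, A j k))) ^ 2 :=
    Finset.sum_nonneg fun i _ => Finset.sum_nonneg fun j _ =>
      mul_nonneg (hnonneg i j) (sq_nonneg _)
  linarith

theorem neg_dotProduct_self_lt_symmNormalized (hA : A.IsSymm) (hnonneg : ∀ i j, 0 ≤ A i j)
    (hdiag : ∀ i, 0 < A i i) {x : ι → ℝ} (hx : x ≠ 0) :
    -(x ⬝ᵥ x) < x ⬝ᵥ symmNormalized A *ᵥ x := by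
  have hdeg := sum_row_pos hnonneg hdiag
  have h := sum_mul_sub_sq_symmNormalized hA hdeg x (ε := -1) (by norm_num)
  set y : ι → ℝ := fun i => x i / √(∑ k, A i k)
  obtain ⟨i, hi⟩ := Function.ne_iff.1 hx
  have hyi : y i - -1 * y i ≠ 0 := by
    have : y i ≠ 0 := div_ne_zero hi (Real.sqrt_pos.2 (hdeg i)).ne'
    contrapose! this
    linarith
  have hterm : ∀ i j, 0 ≤ A i j * (y i - -1 * y j) ^ 2 := fun i j =>
    mul_nonneg (hnonneg i j) (sq_nonneg _)
  have hloop : 0 < A i i * (y i - -1 * y i) ^ 2 := mul_pos (hdiag i) (pow_two_pos_of_ne_zero hyi)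
  have : 0 < ∑ i, ∑ j, A i j * (y i - -1 * y j) ^ 2 :=
    Finset.sum_pos' (fun i _ => Finset.sum_nonneg fun j _ => hterm i j)
      ⟨i, Finset.mem_univ i, Finset.sum_pos' (fun j _ => hterm i j) ⟨i, Finset.mem_univ i, hloop⟩⟩
  linarith

theorem exists_tendsto_pow_symmNormalized [DecidableEq ι] (hA : A.IsSymm)
    (hnonneg : ∀ i j, 0 ≤ A i j) (hdiag : ∀ i, 0 < A i i) :
    ∃ P, Tendsto (fun K : ℕ => symmNormalized A ^ K) atTop (𝓝 P) :=
  (isHermitian_symmNormalized hA).exists_tendsto_pow <|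
    (isHermitian_symmNormalized hA).eigenvalues_mem_Ioc fun _ hx =>
      ⟨neg_dotProduct_self_lt_symmNormalized hA hnonneg hdiag hx,
        dotProduct_symmNormalized_mulVec_le hA hnonneg (sum_row_pos hnonneg hdiag) _⟩

theorem div_sqrt_eq_of_symmNormalized_mulVec_eq (hA : A.IsSymm) (hnonneg : ∀ i j, 0 ≤ A i j)
    (hdeg : ∀ i, 0 < ∑ k, A i k) {x : ι → ℝ} (hx : symmNormalized A *ᵥ x = x) {i j : ι}
    (hij : A i j ≠ 0) :
    x i / √(∑ k, A i k) = x j / √(∑ k, A j k) := by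
  have h := sum_mul_sub_sq_symmNormalized hA hdeg x (one_pow 2)
  rw [hx] at h
  have hterm : ∀ i j, 0 ≤ A i j * (x i / √(∑ k, A i k) - 1 * (x j / √(∑ k, A j k))) ^ 2 :=
    fun i j => mul_nonneg (hnonneg i j) (sq_nonneg _)
  have hzero := (Finset.sum_eq_zero_iff_of_nonneg fun j _ => hterm i j).1
    ((Finset.sum_eq_zero_iff_of_nonneg fun i _ => Finset.sum_nonneg fun j _ => hterm i j).1
      (by linarith) i (Finset.mem_univ i)) j (Finset.mem_univ j)
  rwa [mul_eq_zero, or_iff_right hij, one_mul, sq_eq_zero_iff, sub_eq_zero] at hzero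

theorem inv_sqrt_smul_eq_of_symmNormalized_mul_eq {κ : Type*} (hA : A.IsSymm)
    (hnonneg : ∀ i j, 0 ≤ A i j) (hdeg : ∀ i, 0 < ∑ k, A i k) {Y : Matrix ι κ ℝ}
    (hY : symmNormalized A * Y = Y) {i j : ι} (hij : A i j ≠ 0) :
    (√(∑ k, A i k))⁻¹ • Y i = (√(∑ k, A j k))⁻¹ • Y j := by
  ext c
  have hcol : symmNormalized A *ᵥ (fun k => Y k c) = fun k => Y k c := by
    ext k
    exact congrFun (congrFun hY k) c
  simpa [inv_mul_eq_div] using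
    div_sqrt_eq_of_symmNormalized_mulVec_eq hA hnonneg hdeg hcol hij

end SymmNormalized

theorem SimpleGraph.Walk.apply_eq_of_forall_adj {V β : Type*} {G : SimpleGraph V} {f : V → β}
    (hf : ∀ u v, G.Adj u v → f u = f v) {u v : V} (p : G.Walk u v) : f u = f v := by
  induction p with
  | nil => rfl
  | cons h _ ih => exact (hf _ _ h).trans ih

theorem SimpleGraph.adjMatrix_add_one_nonneg {V R : Type*} [DecidableEq V] (G : SimpleGraph V)
    [DecidableRel G.Adj] [Semiring R] [PartialOrder R] [IsOrderedRing R] (i j : V) :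
    0 ≤ (G.adjMatrix R + 1) i j := by
  by_cases hij : i = j <;> by_cases hadj : G.Adj i j <;> simp [hij, hadj, one_apply]

theorem stmt_12_general {n f : ℕ} (G : SimpleGraph (Fin n))
    [DecidableRel G.Adj]
    (Atil : Matrix (Fin n) (Fin n) ℝ) (hAtil : Atil = G.adjMatrix ℝ + 1)
    (d : Fin n → ℝ) (hd : ∀ i, d i = ∑ j, Atil i j)
    (S : Matrix (Fin n) (Fin n) ℝ)
    (hS : ∀ i j, S i j = Atil i j / (Real.sqrt (d i) * Real.sqrt (d j)))
    (X : Matrix (Fin n) (Fin f) ℝ) :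
    ∃ Y : Matrix (Fin n) (Fin f) ℝ,
      Filter.Tendsto (fun K => S ^ K * X) Filter.atTop (nhds Y) ∧
      ∃ c : G.ConnectedComponent → (Fin f → ℝ),
        ∀ v : Fin n, Y v = Real.sqrt (d v) • c (G.connectedComponentMk v) := by
  obtain rfl : d = fun i => ∑ j, Atil i j := funext hd
  obtain rfl : S = symmNormalized Atil := Matrix.ext hS
  subst hAtil
  have hsymm : (G.adjMatrix ℝ + 1).IsSymm := G.isSymm_adjMatrix.add isSymm_one
  have hnonneg := G.adjMatrix_add_one_nonneg (R := ℝ)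
  have hdiag : ∀ i, 0 < (G.adjMatrix ℝ + 1) i i := fun i => by simp
  have hdeg := sum_row_pos hnonneg hdiag
  obtain ⟨P, hP⟩ := exists_tendsto_pow_symmNormalized hsymm hnonneg hdiag
  have hY : Tendsto (fun K : ℕ => symmNormalized _ ^ K * X) atTop (𝓝 (P * X)) :=
    ((continuous_id.matrix_mul continuous_const).tendsto P).comp hP
  have hfixed := Matrix.mul_eq_of_tendsto_pow_mul hY
  let w : Fin n → Fin f → ℝ := fun v => (√(∑ k, (G.adjMatrix ℝ + 1) v k))⁻¹ • (P * X) v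
  have hw : ∀ a b, G.Adj a b → w a = w b := fun a b hab =>
    inv_sqrt_smul_eq_of_symmNormalized_mul_eq hsymm hnonneg hdeg hfixed (by simp [hab, hab.ne])
  refine ⟨P * X, hY, SimpleGraph.ConnectedComponent.lift w fun _ _ p _ =>
    p.apply_eq_of_forall_adj hw, fun v => ?_⟩
  rw [SimpleGraph.ConnectedComponent.lift_mk, smul_inv_smul₀ (Real.sqrt_pos.2 (hdeg v)).ne']

/-- If every connected component is label-monochromatic, then the limit of
`S^K X` exists and, within each component, the rows of the limit are the
common component vector scaled by `√(d̃_v)`. -/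
theorem stmt_12 {n f : ℕ} {L : Type*} (G : SimpleGraph (Fin n))
    [DecidableRel G.Adj] (y : Fin n → L)
    (hmono : ∀ u v : Fin n, G.Reachable u v → y u = y v)
    (Atil : Matrix (Fin n) (Fin n) ℝ) (hAtil : Atil = G.adjMatrix ℝ + 1)
    (d : Fin n → ℝ) (hd : ∀ i, d i = ∑ j, Atil i j)
    (S : Matrix (Fin n) (Fin n) ℝ)
    (hS : ∀ i j, S i j = Atil i j / (Real.sqrt (d i) * Real.sqrt (d j)))
    (X : Matrix (Fin n) (Fin f) ℝ) :
    ∃ Y : Matrix (Fin n) (Fin f) ℝ,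
      Filter.Tendsto (fun K => S ^ K * X) Filter.atTop (nhds Y) ∧
      ∃ c : G.ConnectedComponent → (Fin f → ℝ),
        ∀ v : Fin n, Y v = Real.sqrt (d v) • c (G.connectedComponentMk v) :=
  stmt_12_general G Atil hAtil d hd S hS X
end
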